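/- Let H, V, W, a, L be as follows: H a real Hilbert space, V ⊆ H a dense Hilbert subspace with ‖v‖ ≤ C‖v‖₁, W ⊆ V finite-dimensional, a : V × V → ℝ bounded and coercive on V, and L : H → W the H-orthogonal projection. Let R : V → W be the Ritz projection with respect to a. Then for all w ∈ V: ‖w − Lw‖₁ ≤ c ‖w − Rw‖₁, where c depends only on the continuity and coercivity constants of a and on an inverse inequality constant C_inv for which ‖χ‖₁ ≤ C_inv ρ ‖χ‖ holds for all χ ∈ W (ρ a fixed parameter), together with the approximation property ‖w − Lw‖ ≤ ‖w − Rw‖ and ‖Rw − Lw‖ ∈ W. -/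

import Mathlib

/-!
Split `w - L w = (w - R w) + (R w - L w)`. The second term lies in `W`, so the inverse inequality
bounds it by its `H`-norm, and the best-approximation property of `L` bounds that `H`-norm by
`2 ‖e (w - R w)‖ ≤ 2 C ‖w - R w‖`; hence `c = 1 + 2 C_inv ρ C`.
-/

theorem norm_sub_le_two_mul_of_norm_sub_le {E : Type*} [SeminormedAddCommGroup E] {x r l : E}
    (h : ‖x - l‖ ≤ ‖x - r‖) : ‖r - l‖ ≤ 2 * ‖x - r‖ := by
  calc ‖r - l‖ ≤ ‖r - x‖ + ‖x - l‖ := norm_sub_le_norm_sub_add_norm_sub r x l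
    _ ≤ ‖x - r‖ + ‖x - r‖ := by rw [norm_sub_rev r x]; gcongr
    _ = 2 * ‖x - r‖ := by ring

theorem norm_sub_le_of_inverse_estimate {V H F : Type*} [SeminormedAddCommGroup V]
    [SeminormedAddCommGroup H] [FunLike F V H] [AddMonoidHomClass F V H] {e : F} {K C : ℝ}
    (hK : 0 ≤ K) (he : ∀ v, ‖e v‖ ≤ C * ‖v‖) {w r l : V} (hinv : ‖r - l‖ ≤ K * ‖e (r - l)‖)
    (hbest : ‖e w - e l‖ ≤ ‖e w - e r‖) : ‖w - l‖ ≤ (1 + 2 * K * C) * ‖w - r‖ := by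
  have hrl : ‖r - l‖ ≤ K * (2 * (C * ‖w - r‖)) :=
    calc ‖r - l‖ ≤ K * ‖e r - e l‖ := by rwa [← map_sub]
      _ ≤ K * (2 * ‖e w - e r‖) := by gcongr; exact norm_sub_le_two_mul_of_norm_sub_le hbest
      _ ≤ K * (2 * (C * ‖w - r‖)) := by rw [← map_sub]; gcongr; exact he _
  calc ‖w - l‖ ≤ ‖w - r‖ + ‖r - l‖ := norm_sub_le_norm_sub_add_norm_sub w r l
    _ ≤ ‖w - r‖ + K * (2 * (C * ‖w - r‖)) := by gcongr
    _ = (1 + 2 * K * C) * ‖w - r‖ := by ring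

theorem stmt_13_general {H V : Type*} [NormedAddCommGroup H] [InnerProductSpace ℝ H]
    [NormedAddCommGroup V] [InnerProductSpace ℝ V]
    (e : V →L[ℝ] H) (C : ℝ) (hC : 0 < C)
    (heC : ∀ v : V, ‖e v‖ ≤ C * ‖v‖)
    (W : Submodule ℝ V)
    (a : V →ₗ[ℝ] V →ₗ[ℝ] ℝ)
    (Cinv ρ : ℝ) (hCinv : 0 < Cinv) (hρ : 0 < ρ)
    (hinv : ∀ χ : W, ‖(χ : V)‖ ≤ Cinv * ρ * ‖e (χ : V)‖) :
    ∃ c > (0:ℝ), ∀ (L : H → W) (R : V → W),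
      -- `L` is the `H`-orthogonal projection onto `W`
      (∀ (x : H), ∀ v ∈ W, (inner ℝ (x - e ((L x : W) : V)) (e v) : ℝ) = 0) →
      -- `R` is the Ritz projection with respect to `a`
      (∀ (w : V), ∀ v ∈ W, a ((R w : W) : V) v = a w v) →
      -- best-approximation property of `L` in the `H`-norm
      (∀ w : V, ‖e w - e ((L (e w) : W) : V)‖ ≤ ‖e w - e ((R w : W) : V)‖) →
      ∀ w : V, ‖w - ((L (e w) : W) : V)‖ ≤ c * ‖w - ((R w : W) : V)‖ := by
  refine ⟨1 + 2 * (Cinv * ρ) * C, by positivity, fun L R _ _ hbest w => ?_⟩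
  have hinv_RL : ‖(R w : V) - L (e w)‖ ≤ Cinv * ρ * ‖e ((R w : V) - L (e w))‖ := by
    simpa using hinv (R w - L (e w))
  exact norm_sub_le_of_inverse_estimate (by positivity) heC hinv_RL (hbest w)

/-- Comparison of the `L²`-projection and Ritz-projection errors in the `H¹`-norm
(`‖w − L_h w‖₁ ≤ c ‖w − R_h w‖₁`): `H` plays the role of `L²(Ω)`, `V` (embedded by
`e`) that of `H₀¹(Ω)`, `W ⊆ V` is the finite-dimensional finite element space,
`L` the `H`-orthogonal projection onto `W`, `R` the Ritz projection with respect to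
the bounded coercive form `a`; the inverse inequality `‖χ‖₁ ≤ C_inv ρ ‖χ‖` holds on
`W` and `L` has the best-approximation property in the `H`-norm. -/
theorem stmt_13 {H V : Type*} [NormedAddCommGroup H] [InnerProductSpace ℝ H] [CompleteSpace H]
    [NormedAddCommGroup V] [InnerProductSpace ℝ V] [CompleteSpace V]
    (e : V →L[ℝ] H) (he : DenseRange e) (C : ℝ) (hC : 0 < C)
    (heC : ∀ v : V, ‖e v‖ ≤ C * ‖v‖)
    (W : Submodule ℝ V) [FiniteDimensional ℝ W]
    (a : V →ₗ[ℝ] V →ₗ[ℝ] ℝ) (α γ : ℝ) (hα : 0 < α) (hγ : 0 < γ)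
    (hbound : ∀ v w : V, |a v w| ≤ α * ‖v‖ * ‖w‖)
    (hcoer : ∀ v : V, γ * ‖v‖ ^ 2 ≤ a v v)
    (Cinv ρ : ℝ) (hCinv : 0 < Cinv) (hρ : 0 < ρ)
    (hinv : ∀ χ : W, ‖(χ : V)‖ ≤ Cinv * ρ * ‖e (χ : V)‖) :
    ∃ c > (0:ℝ), ∀ (L : H → W) (R : V → W),
      -- `L` is the `H`-orthogonal projection onto `W`
      (∀ (x : H), ∀ v ∈ W, (inner ℝ (x - e ((L x : W) : V)) (e v) : ℝ) = 0) →
      -- `R` is the Ritz projection with respect to `a`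
      (∀ (w : V), ∀ v ∈ W, a ((R w : W) : V) v = a w v) →
      -- best-approximation property of `L` in the `H`-norm
      (∀ w : V, ‖e w - e ((L (e w) : W) : V)‖ ≤ ‖e w - e ((R w : W) : V)‖) →
      ∀ w : V, ‖w - ((L (e w) : W) : V)‖ ≤ c * ‖w - ((R w : W) : V)‖ :=
  stmt_13_general e C hC heC W a Cinv ρ hCinv hρ hinv
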